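/- Let λ = (λ₁, λ₂) be a partition with λ₁ ≥ λ₂ ≥ 0 and define Q_{(r,s)}(x,x) and B(λ; σ₁, σ₂) as before. Then Q_{(2λ₁+3, 2λ₂+1)}(x,x) = 4 Σ_{σ₁,σ₂ ∈ S₂} sgn(σ₁) sgn(σ₂) Σ_{(u,v) ∈ B(λ;σ₁,σ₂)} q_{2u₁}(x) q_{2u₂+1}(x) q_{2v₁−1}(x) q_{2v₂}(x). -/

import Mathlib

open Finset

/-- The entry of a pair indexed by `Fin 2` (`0 ↦` first, `1 ↦` second entry). -/
def pget (p : ℕ × ℕ) (i : Fin 2) : ℕ := if i = 0 then p.1 else p.2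

/-- `B(λ; σ₁, σ₂)`: the set of pairs `(u, v)` of pairs of non-negative integers with
`u₁ + u₂ + v₁ + v₂ = λ₁ + λ₂ + 2` and `u_{σ₁(2)} + v_{σ₂(2)} ≤ λ₂`. -/
def Bset (l1 l2 : ℕ) (s1 s2 : Equiv.Perm (Fin 2)) : Finset ((ℕ × ℕ) × (ℕ × ℕ)) :=
  ((Finset.range (l1 + l2 + 3) ×ˢ Finset.range (l1 + l2 + 3)) ×ˢ
      (Finset.range (l1 + l2 + 3) ×ˢ Finset.range (l1 + l2 + 3))).filter
    fun p => p.1.1 + p.1.2 + p.2.1 + p.2.2 = l1 + l2 + 2 ∧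
      pget p.1 (s1 1) + pget p.2 (s2 1) ≤ l2

/-!
Write `Q(t) = ∑ q_r t^r = E(t²) + t O(t²)`. From `Q(t) Q(-t) = 1` one gets `E² - t O² = 1`, and
`Q(t)² = (E² + t O²)(t²) + 2t (E O)(t²)`, so `q_{2k}(x,x)` and `q_{2k+1}(x,x)` are the `k`-th
coefficients of `E² + t O²` and `2 E O`; pairing the alternating sum of the left side by parity and
reflecting indices writes it through the coefficients of `E O`, `E²` and `t O²`.
On the right side, fibring `B(λ; σ₁, σ₂)` over `j = u_{σ₁(2)} + v_{σ₂(2)}` splits each inner sum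
as `∑_{j ≤ λ₂} [t^j] (f g) · [t^{λ₁+λ₂+2-j}] (f' g')`, where `f, f'` and `g, g'` are `E, O` and
`t O, E` in the orders prescribed by `σ₁, σ₂` (the series `t O` has coefficients `q_{2v-1}`).
The four signed terms then match those of the left side, the relation `E² = 1 + t O²` in positive
degree identifying `[t^m] E²` with `[t^m] t O²`.
-/

open PowerSeries Equiv

namespace PowerSeries

variable {R : Type*} [CommRing R]

noncomputable def evenPart (φ : R⟦X⟧) : R⟦X⟧ := mk fun k => coeff (2 * k) φ

noncomputable def oddPart (φ : R⟦X⟧) : R⟦X⟧ := mk fun k => coeff (2 * k + 1) φ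

@[simp] theorem coeff_evenPart (φ : R⟦X⟧) (k : ℕ) : coeff k (evenPart φ) = coeff (2 * k) φ :=
  coeff_mk _ _

@[simp] theorem coeff_oddPart (φ : R⟦X⟧) (k : ℕ) : coeff k (oddPart φ) = coeff (2 * k + 1) φ :=
  coeff_mk _ _

theorem coeff_expand_two_odd (φ : R⟦X⟧) (k : ℕ) : coeff (2 * k + 1) (expand 2 two_ne_zero φ) = 0 :=
  coeff_expand_of_not_dvd _ _ _ (by omega)

theorem coeff_X_mul_expand_two_even (φ : R⟦X⟧) (k : ℕ) :
    coeff (2 * k) (X * expand 2 two_ne_zero φ) = 0 := by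
  rcases k with _ | k
  · exact coeff_zero_X_mul _
  · rw [show 2 * (k + 1) = 2 * k + 1 + 1 by ring, coeff_succ_X_mul, coeff_expand_two_odd]

theorem evenPart_expand_add_X_mul_expand (ψ χ : R⟦X⟧) :
    evenPart (expand 2 two_ne_zero ψ + X * expand 2 two_ne_zero χ) = ψ := by
  ext k
  rw [coeff_evenPart, map_add, coeff_expand_mul, coeff_X_mul_expand_two_even, add_zero]

theorem oddPart_expand_add_X_mul_expand (ψ χ : R⟦X⟧) :
    oddPart (expand 2 two_ne_zero ψ + X * expand 2 two_ne_zero χ) = χ := by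
  ext k
  rw [coeff_oddPart, map_add, coeff_expand_two_odd, coeff_succ_X_mul, coeff_expand_mul, zero_add]

theorem expand_evenPart_add_X_mul_expand_oddPart (φ : R⟦X⟧) :
    expand 2 two_ne_zero (evenPart φ) + X * expand 2 two_ne_zero (oddPart φ) = φ := by
  ext n
  obtain ⟨k, rfl | rfl⟩ := Nat.even_or_odd' n
  · rw [map_add, coeff_expand_mul, coeff_X_mul_expand_two_even, add_zero, coeff_evenPart]
  · rw [map_add, coeff_expand_two_odd, coeff_succ_X_mul, coeff_expand_mul, zero_add,
      coeff_oddPart]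

theorem expand_mul_add_X_mul_expand_mul (ψ χ ψ' χ' : R⟦X⟧) :
    (expand 2 two_ne_zero ψ + X * expand 2 two_ne_zero χ) *
        (expand 2 two_ne_zero ψ' + X * expand 2 two_ne_zero χ') =
      expand 2 two_ne_zero (ψ * ψ' + X * (χ * χ')) +
        X * expand 2 two_ne_zero (ψ * χ' + χ * ψ') := by
  simp only [map_add, map_mul, expand_X]
  ring

theorem evenPart_mul (φ φ' : R⟦X⟧) :
    evenPart (φ * φ') = evenPart φ * evenPart φ' + X * (oddPart φ * oddPart φ') := by
  conv_lhs => rw [← expand_evenPart_add_X_mul_expand_oddPart φ,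
    ← expand_evenPart_add_X_mul_expand_oddPart φ', expand_mul_add_X_mul_expand_mul]
  exact evenPart_expand_add_X_mul_expand _ _

theorem oddPart_mul (φ φ' : R⟦X⟧) :
    oddPart (φ * φ') = evenPart φ * oddPart φ' + oddPart φ * evenPart φ' := by
  conv_lhs => rw [← expand_evenPart_add_X_mul_expand_oddPart φ,
    ← expand_evenPart_add_X_mul_expand_oddPart φ', expand_mul_add_X_mul_expand_mul]
  exact oddPart_expand_add_X_mul_expand _ _

theorem evenPart_one : evenPart (1 : R⟦X⟧) = 1 := by
  ext k
  simp [coeff_one]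

theorem evenPart_evalNegHom (φ : R⟦X⟧) : evenPart (evalNegHom φ) = evenPart φ := by
  ext k
  simp [evalNegHom, pow_mul]

theorem oddPart_evalNegHom (φ : R⟦X⟧) : oddPart (evalNegHom φ) = -oddPart φ := by
  ext k
  simp [evalNegHom, pow_succ, pow_mul]

theorem evenPart_sq_sub_X_mul_oddPart_sq {φ : R⟦X⟧} (hφ : φ * evalNegHom φ = 1) :
    evenPart φ * evenPart φ - X * (oddPart φ * oddPart φ) = 1 := by
  have h := congrArg evenPart hφ
  rw [evenPart_mul, evenPart_evalNegHom, oddPart_evalNegHom, evenPart_one] at h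
  rw [← h]
  ring

theorem coeff_two_mul_add_one_mul_self (φ : R⟦X⟧) (k : ℕ) :
    coeff (2 * k + 1) (φ * φ) = 2 * coeff k (evenPart φ * oddPart φ) := by
  rw [← coeff_oddPart, oddPart_mul, mul_comm (oddPart φ), map_add, two_mul]

theorem coeff_two_mul_mul_self (φ : R⟦X⟧) (k : ℕ) :
    coeff (2 * k) (φ * φ) =
      coeff k (evenPart φ * evenPart φ) + coeff k (X * (oddPart φ * oddPart φ)) := by
  rw [← coeff_evenPart, evenPart_mul, map_add]

theorem coeff_evenPart_mul_self {φ : R⟦X⟧} (hφ : φ * evalNegHom φ = 1) {k : ℕ} (hk : k ≠ 0) :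
    coeff k (evenPart φ * evenPart φ) = coeff k (X * (oddPart φ * oddPart φ)) := by
  have h := congrArg (coeff k) (evenPart_sq_sub_X_mul_oddPart_sq hφ)
  rwa [map_sub, coeff_one, if_neg hk, sub_eq_zero] at h

theorem evalNegHom_C (r : R) : evalNegHom (C r) = C r := by
  ext n
  rcases n with _ | n <;> simp [evalNegHom, coeff_C]

theorem evalNegHom_evalNegHom (φ : R⟦X⟧) : evalNegHom (evalNegHom φ) = φ := by
  simp [evalNegHom, rescale_rescale]

theorem mul_evalNegHom_eq_one {φ ψ : R⟦X⟧} (hψ : IsUnit ψ) (h : φ * ψ = evalNegHom ψ) :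
    φ * evalNegHom φ = 1 := by
  have h' : evalNegHom φ * evalNegHom ψ = ψ := by
    rw [← map_mul, h, evalNegHom_evalNegHom]
  refine (hψ.mul (hψ.map evalNegHom)).mul_right_cancel ?_
  calc φ * evalNegHom φ * (ψ * evalNegHom ψ) = φ * ψ * (evalNegHom φ * evalNegHom ψ) := by ring
    _ = 1 * (ψ * evalNegHom ψ) := by rw [h, h', one_mul, mul_comm]

variable {ι : Type*} (s : Finset ι) (x : ι → R)

theorem evalNegHom_prod_one_sub_C_mul_X :
    evalNegHom (∏ i ∈ s, (1 - C (x i) * X)) = ∏ i ∈ s, (1 + C (x i) * X) := by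
  simp [map_prod, evalNegHom_C, sub_eq_add_neg]

theorem isUnit_prod_one_sub_C_mul_X : IsUnit (∏ i ∈ s, (1 - C (x i) * X)) := by
  simp [isUnit_iff_constantCoeff]

end PowerSeries

theorem Equiv.Perm.fin_two_eq_one_or_eq_swap (s : Perm (Fin 2)) : s = 1 ∨ s = swap 0 1 := by
  revert s
  decide

def permPair (s : Perm (Fin 2)) (u : ℕ × ℕ) : ℕ × ℕ := (pget u (s 0), pget u (s 1))

section PermPair

variable (s : Perm (Fin 2)) (u : ℕ × ℕ)

theorem permPair_permPair : permPair s (permPair s u) = u := by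
  rcases s.fin_two_eq_one_or_eq_swap with rfl | rfl <;> rfl

theorem fst_add_snd_permPair : (permPair s u).1 + (permPair s u).2 = u.1 + u.2 := by
  rcases s.fin_two_eq_one_or_eq_swap with rfl | rfl
  · rfl
  · exact add_comm _ _

theorem mul_pget_apply {A : Type*} [CommMonoid A] (f : Fin 2 → ℕ → A) :
    f 0 (pget u (s 0)) * f 1 (pget u (s 1)) = f (s 0) u.1 * f (s 1) u.2 := by
  rcases s.fin_two_eq_one_or_eq_swap with rfl | rfl
  · rfl
  · exact mul_comm _ _

end PermPair

section Bset

variable {l1 l2 : ℕ} {s1 s2 : Perm (Fin 2)}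

theorem mem_Bset {p : (ℕ × ℕ) × (ℕ × ℕ)} :
    p ∈ Bset l1 l2 s1 s2 ↔ p.1.1 + p.1.2 + p.2.1 + p.2.2 = l1 + l2 + 2 ∧
      pget p.1 (s1 1) + pget p.2 (s2 1) ≤ l2 := by
  rw [Bset, mem_filter, mem_product, mem_product, mem_product, mem_range, mem_range, mem_range,
    mem_range, and_iff_right_iff_imp]
  omega

theorem mem_Bset_one_one {p : (ℕ × ℕ) × (ℕ × ℕ)} :
    p ∈ Bset l1 l2 1 1 ↔ p.1.1 + p.1.2 + p.2.1 + p.2.2 = l1 + l2 + 2 ∧ p.1.2 + p.2.2 ≤ l2 :=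
  mem_Bset

theorem permPair_mem_Bset_one_one_iff {p : (ℕ × ℕ) × (ℕ × ℕ)} :
    (permPair s1 p.1, permPair s2 p.2) ∈ Bset l1 l2 1 1 ↔ p ∈ Bset l1 l2 s1 s2 := by
  have h1 := fst_add_snd_permPair s1 p.1
  have h2 := fst_add_snd_permPair s2 p.2
  rw [mem_Bset_one_one, mem_Bset]
  dsimp only at h1 h2 ⊢
  exact and_congr_left' (by omega)

theorem sum_Bset_eq_sum_Bset_one_one {M : Type*} [AddCommMonoid M]
    (F : (ℕ × ℕ) × (ℕ × ℕ) → M) :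
    ∑ p ∈ Bset l1 l2 s1 s2, F p =
      ∑ p ∈ Bset l1 l2 1 1, F (permPair s1 p.1, permPair s2 p.2) := by
  refine sum_nbij' (fun p => (permPair s1 p.1, permPair s2 p.2))
    (fun p => (permPair s1 p.1, permPair s2 p.2)) (fun p => permPair_mem_Bset_one_one_iff.2)
    (fun p hp => by
      rw [← permPair_mem_Bset_one_one_iff]
      simpa only [permPair_permPair] using hp)
    (fun p _ => by simp only [permPair_permPair]) (fun p _ => by simp only [permPair_permPair])
    (fun p _ => by simp only [permPair_permPair])

theorem sum_Bset_one_one {A : Type*} [CommRing A] (f g h k : ℕ → A) :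
    ∑ p ∈ Bset l1 l2 1 1, f p.1.1 * g p.1.2 * h p.2.1 * k p.2.2 =
      ∑ j ∈ range (l2 + 1),
        coeff j (mk g * mk k) * coeff (l1 + l2 + 2 - j) (mk f * mk h) := by
  simp only [coeff_mul, coeff_mk, sum_mul_sum, ← sum_product', sum_sigma']
  refine sum_nbij' (fun p => ⟨p.1.2 + p.2.2, ((p.1.2, p.2.2), (p.1.1, p.2.1))⟩)
    (fun x => ((x.2.2.1, x.2.1.1), (x.2.2.2, x.2.1.2))) ?_ ?_ ?_ ?_ ?_
  · intro p hp
    rw [mem_Bset_one_one] at hp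
    simp only [mem_sigma, mem_range, mem_product, HasAntidiagonal.mem_antidiagonal]
    grind
  · intro x hx
    simp only [mem_sigma, mem_range, mem_product,
      HasAntidiagonal.mem_antidiagonal] at hx
    rw [mem_Bset_one_one]
    grind
  · intro p _
    rfl
  · intro x hx
    simp only [mem_sigma, mem_range, mem_product,
      HasAntidiagonal.mem_antidiagonal] at hx
    ext <;> grind
  · intro p _
    ring

theorem sum_Bset {A : Type*} [CommRing A] (f g : Fin 2 → ℕ → A) :
    ∑ p ∈ Bset l1 l2 s1 s2, f 0 p.1.1 * f 1 p.1.2 * g 0 p.2.1 * g 1 p.2.2 =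
      ∑ j ∈ range (l2 + 1), coeff j (mk (f (s1 1)) * mk (g (s2 1))) *
        coeff (l1 + l2 + 2 - j) (mk (f (s1 0)) * mk (g (s2 0))) := by
  rw [sum_Bset_eq_sum_Bset_one_one, ← sum_Bset_one_one]
  refine sum_congr rfl fun p _ => ?_
  dsimp only [permPair]
  linear_combination (g 0 (pget p.2 (s2 0)) * g 1 (pget p.2 (s2 1))) * mul_pget_apply s1 p.1 f +
    (f (s1 0) p.1.1 * f (s1 1) p.1.2) * mul_pget_apply s2 p.2 g

end Bset

theorem sum_sign_mul_sign_fin_two {A : Type*} [CommRing A] (T : Perm (Fin 2) × Perm (Fin 2) → A) :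
    ∑ s : Perm (Fin 2) × Perm (Fin 2), ((Perm.sign s.1 * Perm.sign s.2 : ℤ) : A) * T s =
      T (1, 1) - T (1, swap 0 1) - T (swap 0 1, 1) + T (swap 0 1, swap 0 1) := by
  have huniv : (univ : Finset (Perm (Fin 2))) = {1, swap 0 1} := by decide
  have hswap : (1 : Perm (Fin 2)) ≠ swap 0 1 := by decide
  simp only [Fintype.sum_prod_type, huniv, sum_pair hswap, Perm.sign_one,
    Perm.sign_swap (show (0 : Fin 2) ≠ 1 by decide)]
  push_cast
  ring

theorem sum_Icc_one_two_mul_add_one {M : Type*} [AddCommMonoid M] (f : ℕ → M) (m : ℕ) :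
    ∑ i ∈ Icc 1 (2 * m + 1), f i =
      ∑ j ∈ range (m + 1), f (2 * j + 1) + ∑ j ∈ range m, f (2 * j + 2) := by
  induction m with
  | zero => simp
  | succ m ih =>
    rw [show 2 * (m + 1) + 1 = 2 * m + 1 + 1 + 1 by ring, sum_Icc_succ_top (by omega),
      sum_Icc_succ_top (by omega), ih, sum_range_succ (fun j => f (2 * j + 1)) (m + 1),
      sum_range_succ (fun j => f (2 * j + 2)) m]
    abel

section TwoRow

variable {A : Type*} [CommRing A] (qq a P R : ℕ → A)
  (hodd : ∀ k, qq (2 * k + 1) = 2 * a k) (heven : ∀ k, qq (2 * k) = P k + R k)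
  (hPR : ∀ k, k ≠ 0 → P k = R k)

include hodd heven hPR in
theorem two_row_alternating_sum (l1 l2 : ℕ) :
    qq (2 * l1 + 3) * qq (2 * l2 + 1) +
        2 * ∑ i ∈ Icc 1 (2 * l2 + 1), (-1 : A) ^ i * qq (2 * l1 + 3 + i) * qq (2 * l2 + 1 - i) =
      4 * (∑ j ∈ range (l2 + 1), a j * a (l1 + l2 + 2 - 1 - j) -
        ∑ j ∈ range (l2 + 1), R j * P (l1 + l2 + 2 - j) -
        ∑ j ∈ range (l2 + 1), P j * R (l1 + l2 + 2 - j) +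
        ∑ j ∈ range l2, a j * a (l1 + l2 + 2 - 1 - j)) := by
  have h_odd_i : ∑ j ∈ range (l2 + 1), (-1 : A) ^ (2 * j + 1) * qq (2 * l1 + 3 + (2 * j + 1)) *
        qq (2 * l2 + 1 - (2 * j + 1)) =
      -2 * ∑ j ∈ range (l2 + 1), (R j * P (l1 + l2 + 2 - j) + P j * R (l1 + l2 + 2 - j)) := by
    rw [mul_sum, ← sum_range_reflect _ (l2 + 1)]
    refine sum_congr rfl fun j hj => ?_
    rw [mem_range] at hj
    rw [show 2 * l1 + 3 + (2 * (l2 + 1 - 1 - j) + 1) = 2 * (l1 + l2 + 2 - j) by omega,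
      show 2 * l2 + 1 - (2 * (l2 + 1 - 1 - j) + 1) = 2 * j by omega, heven, heven,
      hPR _ (by omega), Odd.neg_one_pow ⟨_, rfl⟩]
    ring
  have h_even_i : ∑ j ∈ range l2, (-1 : A) ^ (2 * j + 2) * qq (2 * l1 + 3 + (2 * j + 2)) *
        qq (2 * l2 + 1 - (2 * j + 2)) = 4 * ∑ j ∈ range l2, a j * a (l1 + l2 + 2 - 1 - j) := by
    rw [mul_sum, ← sum_range_reflect _ l2]
    refine sum_congr rfl fun j hj => ?_
    rw [mem_range] at hj
    rw [show 2 * l1 + 3 + (2 * (l2 - 1 - j) + 2) = 2 * (l1 + l2 + 2 - 1 - j) + 1 by omega,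
      show 2 * l2 + 1 - (2 * (l2 - 1 - j) + 2) = 2 * j + 1 by omega, hodd, hodd,
      Even.neg_one_pow ⟨l2 - 1 - j + 1, by ring⟩]
    ring
  rw [sum_Icc_one_two_mul_add_one, h_odd_i, h_even_i, show 2 * l1 + 3 = 2 * (l1 + 1) + 1 by ring,
    hodd, hodd, sum_range_succ (fun j => a j * a (l1 + l2 + 2 - 1 - j)),
    show l1 + l2 + 2 - 1 - l2 = l1 + 1 by omega, sum_add_distrib]
  ring

end TwoRow

theorem sum_coeff_mul_coeff_X_mul {A : Type*} [CommRing A] (φ ψ : A⟦X⟧) {L N : ℕ} (hL : L < N) :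
    ∑ j ∈ range (L + 1), coeff j φ * coeff (N - j) (X * ψ) =
      ∑ j ∈ range (L + 1), coeff j φ * coeff (N - 1 - j) ψ := by
  refine sum_congr rfl fun j hj => ?_
  rw [mem_range] at hj
  rw [show N - j = N - 1 - j + 1 by omega, coeff_succ_X_mul]

theorem sum_coeff_X_mul_mul_coeff {A : Type*} [CommRing A] (φ ψ : A⟦X⟧) (L N : ℕ) :
    ∑ j ∈ range (L + 1), coeff j (X * φ) * coeff (N - j) ψ =
      ∑ j ∈ range L, coeff j φ * coeff (N - 1 - j) ψ := by
  rw [sum_range_succ', coeff_zero_X_mul, zero_mul, add_zero]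
  refine sum_congr rfl fun j _ => ?_
  rw [coeff_succ_X_mul, Nat.sub_add_eq, Nat.sub_right_comm]

theorem Q_two_row_odd_expression_general (n : ℕ)
    (q : ℤ → MvPolynomial (Fin n) ℚ) (qq : ℕ → MvPolynomial (Fin n) ℚ)
    (hneg : ∀ r : ℤ, r < 0 → q r = 0)
    (hq : (PowerSeries.mk fun r : ℕ => q r) *
        ∏ i : Fin n, (1 - PowerSeries.C (MvPolynomial.X i : MvPolynomial (Fin n) ℚ) *
          PowerSeries.X)
      = ∏ i : Fin n, (1 + PowerSeries.C (MvPolynomial.X i : MvPolynomial (Fin n) ℚ) *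
          PowerSeries.X))
    (hqq : (PowerSeries.mk fun r => qq r) *
        (∏ i : Fin n, (1 - PowerSeries.C (MvPolynomial.X i : MvPolynomial (Fin n) ℚ) *
          PowerSeries.X)) ^ 2
      = (∏ i : Fin n, (1 + PowerSeries.C (MvPolynomial.X i : MvPolynomial (Fin n) ℚ) *
          PowerSeries.X)) ^ 2)
    (l1 l2 : ℕ) :
    qq (2 * l1 + 3) * qq (2 * l2 + 1) +
        2 * ∑ i ∈ Finset.Icc 1 (2 * l2 + 1),
          (-1 : MvPolynomial (Fin n) ℚ) ^ i * qq (2 * l1 + 3 + i) * qq (2 * l2 + 1 - i)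
      = 4 * ∑ s : Equiv.Perm (Fin 2) × Equiv.Perm (Fin 2),
          (((Equiv.Perm.sign s.1 : ℤ) * (Equiv.Perm.sign s.2 : ℤ) : ℤ) :
              MvPolynomial (Fin n) ℚ) *
            ∑ p ∈ Bset l1 l2 s.1 s.2,
              q (2 * p.1.1) * q (2 * p.1.2 + 1) * q (2 * (p.2.1 : ℤ) - 1) * q (2 * p.2.2) := by
  set Q := mk fun r : ℕ => q r
  have hD := isUnit_prod_one_sub_C_mul_X univ fun i : Fin n =>
    (MvPolynomial.X i : MvPolynomial (Fin n) ℚ)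
  have hQ : Q * evalNegHom Q = 1 :=
    mul_evalNegHom_eq_one hD (hq.trans (evalNegHom_prod_one_sub_C_mul_X _ _).symm)
  have hQQ : mk (fun r => qq r) = Q * Q :=
    (hD.pow 2).mul_right_cancel (hqq.trans (by rw [← hq]; ring))
  have hqq_coeff (m : ℕ) : qq m = coeff m (Q * Q) := by rw [← hQQ, coeff_mk]
  have hE : mk (fun k : ℕ => q (2 * k)) = evenPart Q := by
    ext k; simp [Q]
  have hO : mk (fun k : ℕ => q (2 * k + 1)) = oddPart Q := by
    ext k; simp [Q]
  have hXO : mk (fun k : ℕ => q (2 * k - 1)) = X * oddPart Q := by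
    ext (_ | k)
    · simp [hneg]
    · rw [coeff_mk, coeff_succ_X_mul, ← hO, coeff_mk]
      push_cast
      ring_nf
  have hB (s1 s2 : Perm (Fin 2)) : ∑ p ∈ Bset l1 l2 s1 s2,
      q (2 * p.1.1) * q (2 * p.1.2 + 1) * q (2 * (p.2.1 : ℤ) - 1) * q (2 * p.2.2) = _ :=
    sum_Bset ![fun a : ℕ => q (2 * a), fun b : ℕ => q (2 * b + 1)]
      ![fun c : ℕ => q (2 * c - 1), fun d : ℕ => q (2 * d)]
  rw [two_row_alternating_sum qq (fun k => coeff k (evenPart Q * oddPart Q))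
    (fun k => coeff k (evenPart Q * evenPart Q)) (fun k => coeff k (X * (oddPart Q * oddPart Q)))
    (fun k => by rw [hqq_coeff, coeff_two_mul_add_one_mul_self])
    (fun k => by rw [hqq_coeff, coeff_two_mul_mul_self])
    (fun k hk => coeff_evenPart_mul_self hQ hk), sum_sign_mul_sign_fin_two]
  simp only [hB, Perm.one_apply, swap_apply_left, swap_apply_right, Matrix.cons_val_zero,
    Matrix.cons_val_one, hE, hO, hXO]
  rw [mul_comm (oddPart Q) (evenPart Q), mul_left_comm (evenPart Q) X,
    mul_left_comm (oddPart Q) X, sum_coeff_mul_coeff_X_mul (ψ := evenPart Q * oddPart Q) _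
      (by omega : l2 < l1 + l2 + 2), sum_coeff_X_mul_mul_coeff (evenPart Q * oddPart Q)]

/-- New expression of the two-row Schur `Q`-function `Q_{(2λ₁+3,2λ₂+1)}(x,x)` as a signed
sum of products of four single-variable `q`-coefficients over the sets `B(λ;σ₁,σ₂)`. -/
theorem Q_two_row_odd_expression (n : ℕ) (hn : 1 ≤ n)
    (q : ℤ → MvPolynomial (Fin n) ℚ) (qq : ℕ → MvPolynomial (Fin n) ℚ)
    (hneg : ∀ r : ℤ, r < 0 → q r = 0)
    (hq : (PowerSeries.mk fun r : ℕ => q r) *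
        ∏ i : Fin n, (1 - PowerSeries.C (MvPolynomial.X i : MvPolynomial (Fin n) ℚ) *
          PowerSeries.X)
      = ∏ i : Fin n, (1 + PowerSeries.C (MvPolynomial.X i : MvPolynomial (Fin n) ℚ) *
          PowerSeries.X))
    (hqq : (PowerSeries.mk fun r => qq r) *
        (∏ i : Fin n, (1 - PowerSeries.C (MvPolynomial.X i : MvPolynomial (Fin n) ℚ) *
          PowerSeries.X)) ^ 2
      = (∏ i : Fin n, (1 + PowerSeries.C (MvPolynomial.X i : MvPolynomial (Fin n) ℚ) *
          PowerSeries.X)) ^ 2)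
    (l1 l2 : ℕ) (h : l2 ≤ l1) :
    qq (2 * l1 + 3) * qq (2 * l2 + 1) +
        2 * ∑ i ∈ Finset.Icc 1 (2 * l2 + 1),
          (-1 : MvPolynomial (Fin n) ℚ) ^ i * qq (2 * l1 + 3 + i) * qq (2 * l2 + 1 - i)
      = 4 * ∑ s : Equiv.Perm (Fin 2) × Equiv.Perm (Fin 2),
          (((Equiv.Perm.sign s.1 : ℤ) * (Equiv.Perm.sign s.2 : ℤ) : ℤ) :
              MvPolynomial (Fin n) ℚ) *
            ∑ p ∈ Bset l1 l2 s.1 s.2,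
              q (2 * p.1.1) * q (2 * p.1.2 + 1) * q (2 * (p.2.1 : ℤ) - 1) * q (2 * p.2.2) :=
  Q_two_row_odd_expression_general n q qq hneg hq hqq l1 l2
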